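/- A diagonal function δ is an extreme point of the convex set of diagonal sections of semilinear semi-copulas if and only if there exists a ∈ [0,1] such that δ = δ_a^R or δ = δ_a^L, where δ_a^R(x) = 0 for 0 ≤ x < a and δ_a^R(x) = x for a ≤ x ≤ 1, and δ_a^L(x) = 0 for 0 ≤ x ≤ a and δ_a^L(x) = x for a < x ≤ 1. -/

import Mathlib

/-- Diagonal section of a semilinear semi-copula. -/
def IsSemiCopulaDiagonal (d : ℝ → ℝ) : Prop :=
  MonotoneOn d (Set.Icc 0 1) ∧ (∀ x ∈ Set.Icc (0:ℝ) 1, 0 ≤ d x ∧ d x ≤ x) ∧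
  d 1 = 1 ∧ MonotoneOn (fun x => d x / x) (Set.Ioc (0:ℝ) 1)

/-- Extreme point (midpoint characterization) of the set of semilinear
semi-copula diagonals, with functions compared on `[0,1]`. -/
def IsExtremeSemiDiag (d : ℝ → ℝ) : Prop :=
  IsSemiCopulaDiagonal d ∧
  ∀ d₁ d₂ : ℝ → ℝ, IsSemiCopulaDiagonal d₁ → IsSemiCopulaDiagonal d₂ →
    (∀ x ∈ Set.Icc (0:ℝ) 1, d x = (d₁ x + d₂ x) / 2) →
    ∀ x ∈ Set.Icc (0:ℝ) 1, d₁ x = d₂ x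

/-!
A semilinear diagonal is the same thing as `x ↦ x * ρ x` with `ρ` non-decreasing from `(0, 1]`
to `[0, 1]` and `ρ 1 = 1`; `ρ` is the ratio `δ x / x`. If `0 < ρ x₀ = c < 1` for some `x₀`,
then `ρ` is the midpoint of `(1 - c) ρ + min ρ c` and `c ρ + max ρ c - c`, which are again such
ratios and differ at `x₀`. Hence an extreme diagonal only takes the values `0` and `x`, and being
monotone it is a threshold function `δ_a^R` or `δ_a^L`, with `a` the supremum of its zero set.
Conversely such a `δ` is extreme, because `0` and `x` are the endpoints of the interval `[0, x]`
in which every diagonal takes its value at `x`.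
-/

open Set

lemma isSemiCopulaDiagonal_mul {ρ : ℝ → ℝ} (hmono : MonotoneOn ρ (Ioc 0 1))
    (hmaps : MapsTo ρ (Ioc 0 1) (Icc 0 1)) (h1 : ρ 1 = 1) :
    IsSemiCopulaDiagonal (fun x => x * ρ x) := by
  have hbound : ∀ x ∈ Icc (0 : ℝ) 1, 0 ≤ x * ρ x ∧ x * ρ x ≤ x := by
    intro x hx
    rcases hx.1.eq_or_lt with rfl | hx0
    · simp
    · obtain ⟨hρ0, hρ1⟩ := hmaps ⟨hx0, hx.2⟩
      exact ⟨mul_nonneg hx.1 hρ0, mul_le_of_le_one_right hx.1 hρ1⟩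
  refine ⟨?_, hbound, by simp [h1], ?_⟩
  · intro x hx y hy hxy
    rcases hx.1.eq_or_lt with rfl | hx0
    · simpa using (hbound y hy).1
    · have hxI : x ∈ Ioc 0 1 := ⟨hx0, hx.2⟩
      have hyI : y ∈ Ioc 0 1 := ⟨hx0.trans_le hxy, hy.2⟩
      exact mul_le_mul hxy (hmono hxI hyI hxy) (hmaps hxI).1 hy.1
  · refine hmono.congr fun x hx => ?_
    simp [mul_div_cancel_left₀ _ hx.1.ne']

namespace IsSemiCopulaDiagonal

variable {d : ℝ → ℝ}

lemma map_zero (hd : IsSemiCopulaDiagonal d) : d 0 = 0 := by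
  obtain ⟨h0, h1⟩ := hd.2.1 0 (left_mem_Icc.2 zero_le_one)
  linarith

lemma ratio_mem_Icc (hd : IsSemiCopulaDiagonal d) {x : ℝ} (hx : x ∈ Ioc 0 1) :
    d x / x ∈ Icc 0 1 := by
  obtain ⟨h0, h1⟩ := hd.2.1 x (Ioc_subset_Icc_self hx)
  exact ⟨div_nonneg h0 hx.1.le, div_le_one_of_le₀ h1 hx.1.le⟩

lemma mul_ratio_eq (hd : IsSemiCopulaDiagonal d) {x : ℝ} (hx : x ∈ Icc 0 1) :
    x * (d x / x) = d x := by
  rcases hx.1.eq_or_lt with rfl | hx0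
  · simp [hd.map_zero]
  · exact mul_div_cancel₀ _ hx0.ne'

lemma comp_ratio (hd : IsSemiCopulaDiagonal d) {φ : ℝ → ℝ} (hmono : MonotoneOn φ (Icc 0 1))
    (hmaps : MapsTo φ (Icc 0 1) (Icc 0 1)) (h1 : φ 1 = 1) :
    IsSemiCopulaDiagonal (fun x => x * φ (d x / x)) :=
  isSemiCopulaDiagonal_mul (hmono.comp hd.2.2.2 fun _ hx => hd.ratio_mem_Icc hx)
    (hmaps.comp fun _ hx => hd.ratio_mem_Icc hx) (by simp [hd.2.2.1, h1])

lemma exists_midpoint_split (hd : IsSemiCopulaDiagonal d) {x₀ : ℝ}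
    (hpos : 0 < d x₀) (hlt : d x₀ < x₀) :
    ∃ d₁ d₂ : ℝ → ℝ, IsSemiCopulaDiagonal d₁ ∧ IsSemiCopulaDiagonal d₂ ∧
      (∀ x ∈ Icc (0 : ℝ) 1, d x = (d₁ x + d₂ x) / 2) ∧ d₁ x₀ ≠ d₂ x₀ := by
  have hx₀pos : 0 < x₀ := hpos.trans hlt
  set c := d x₀ / x₀ with hc
  have hc0 : 0 < c := div_pos hpos hx₀pos
  have hc1 : c < 1 := (div_lt_one hx₀pos).2 hlt
  refine ⟨_, _, hd.comp_ratio (φ := fun r => (1 - c) * r + min r c) ?_ ?_ ?_,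
    hd.comp_ratio (φ := fun r => c * r + max r c - c) ?_ ?_ ?_, ?_, ?_⟩
  · intro r _ s _ hrs
    have := min_le_min_right c hrs
    nlinarith
  · intro r ⟨hr0, hr1⟩
    constructor <;> cases min_cases r c <;> nlinarith
  · simp [hc1.le]
  · intro r _ s _ hrs
    have := max_le_max_right c hrs
    nlinarith
  · intro r ⟨hr0, hr1⟩
    constructor <;> cases max_cases r c <;> nlinarith
  · simp [hc1.le]
  · intro x hx
    linear_combination (-1 : ℝ) * hd.mul_ratio_eq hx - x / 2 * min_add_max (d x / x) c
  · simp only [← hc, min_self, max_self]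
    intro h
    nlinarith [mul_pos (mul_pos hx₀pos hc0) (sub_pos.2 hc1)]

end IsSemiCopulaDiagonal

lemma IsExtremeSemiDiag.eq_zero_or_eq_self {d : ℝ → ℝ} (h : IsExtremeSemiDiag d) {x : ℝ}
    (hx : x ∈ Icc 0 1) : d x = 0 ∨ d x = x := by
  by_contra! hne
  obtain ⟨h0, h1⟩ := h.1.2.1 x hx
  obtain ⟨d₁, d₂, hd₁, hd₂, hmid, hsplit⟩ :=
    h.1.exists_midpoint_split (h0.lt_of_ne' hne.1) (h1.lt_of_ne hne.2)
  exact hsplit (h.2 d₁ d₂ hd₁ hd₂ hmid x hx)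

lemma isExtremeSemiDiag_of_eq_zero_or_eq_self {d : ℝ → ℝ} (hd : IsSemiCopulaDiagonal d)
    (h : ∀ x ∈ Icc (0 : ℝ) 1, d x = 0 ∨ d x = x) : IsExtremeSemiDiag d := by
  refine ⟨hd, fun d₁ d₂ hd₁ hd₂ hmid x hx => ?_⟩
  obtain ⟨h₁0, h₁x⟩ := hd₁.2.1 x hx
  obtain ⟨h₂0, h₂x⟩ := hd₂.2.1 x hx
  rcases h x hx with hdx | hdx <;> linarith [hmid x hx]

lemma exists_threshold_of_monotoneOn {f : ℝ → ℝ} (hf : MonotoneOn f (Icc 0 1))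
    (h : ∀ x ∈ Icc (0 : ℝ) 1, f x = 0 ∨ f x = x) :
    ∃ a ∈ Icc (0 : ℝ) 1,
      (∀ x ∈ Icc (0 : ℝ) 1, f x = if x < a then 0 else x) ∨
      (∀ x ∈ Icc (0 : ℝ) 1, f x = if x ≤ a then 0 else x) := by
  set Z := {x ∈ Icc (0 : ℝ) 1 | f x = 0}
  have h0I : (0 : ℝ) ∈ Icc 0 1 := left_mem_Icc.2 zero_le_one
  have h0Z : (0 : ℝ) ∈ Z := ⟨h0I, (h 0 h0I).elim id id⟩
  have hbdd : BddAbove Z := ⟨1, fun x hx => hx.1.2⟩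
  set a := sSup Z
  have below : ∀ x ∈ Icc (0 : ℝ) 1, x < a → f x = 0 := by
    intro x hx hxa
    obtain ⟨y, ⟨hy, hfy⟩, hxy⟩ := exists_lt_of_lt_csSup ⟨0, h0Z⟩ hxa
    have := hf hx hy hxy.le
    rcases h x hx with hfx | hfx <;> linarith [hx.1]
  have above : ∀ x ∈ Icc (0 : ℝ) 1, a < x → f x = x := fun x hx hax =>
    (h x hx).resolve_left fun hfx => (le_csSup hbdd ⟨hx, hfx⟩).not_gt hax
  have ha : a ∈ Icc (0 : ℝ) 1 :=
    ⟨le_csSup hbdd h0Z, csSup_le ⟨0, h0Z⟩ fun x hx => hx.1.2⟩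
  refine ⟨a, ha, ?_⟩
  rcases h a ha with hfa | hfa
  · right
    intro x hx
    rcases lt_trichotomy x a with hxa | rfl | hxa
    · simp [hxa.le, below x hx hxa]
    · simp [hfa]
    · simp [hxa.not_ge, above x hx hxa]
  · left
    intro x hx
    rcases lt_trichotomy x a with hxa | rfl | hxa
    · simp [hxa, below x hx hxa]
    · simp [hfa]
    · simp [hxa.not_gt, above x hx hxa]

theorem extreme_semicopula_diagonals (d : ℝ → ℝ) (hd : IsSemiCopulaDiagonal d) :
    IsExtremeSemiDiag d ↔
      ∃ a ∈ Set.Icc (0:ℝ) 1,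
        (∀ x ∈ Set.Icc (0:ℝ) 1, d x = if x < a then 0 else x) ∨
        (∀ x ∈ Set.Icc (0:ℝ) 1, d x = if x ≤ a then 0 else x) := by
  constructor
  · exact fun h => exists_threshold_of_monotoneOn hd.1 fun x hx => h.eq_zero_or_eq_self hx
  · rintro ⟨a, -, h | h⟩ <;>
      refine isExtremeSemiDiag_of_eq_zero_or_eq_self hd fun x hx => ?_ <;>
      rw [h x hx] <;> split_ifs <;> simp
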